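/- arXiv:1909.11224 — 3 statements merged into one kernel-verified Lean document; each statement's English description precedes it below -/
import Mathlib

section
/- (Spatial Pruning) If the min-corner of probabilistic object o'^p dominates the max-corner of probabilistic object o^p, then the dominance probability Pr{o'^p ≺ o^p} equals 1. -/
open scoped Classical BigOperators

def dominates {d : ℕ} (o o' : Fin d → ℝ) : Prop :=
  (∀ i, o i ≥ o' i) ∧ (∃ j, o j > o' j)

theorem dominates.mono {d : ℕ} {o o' u v : Fin d → ℝ} (h : dominates o o') (hu : o ≤ u)
    (hv : v ≤ o') : dominates u v := by
  obtain ⟨hle, k, hk⟩ := h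
  exact ⟨fun i => (hv i).trans ((hle i).trans (hu i)), k, (hv k).trans_lt (hk.trans_le (hu k))⟩

theorem inf'_univ_le_apply {ι α β : Type*} [Fintype ι] [Nonempty ι] [SemilatticeInf β]
    (f : ι → α → β) (i : ι) : (fun a => Finset.univ.inf' Finset.univ_nonempty (f · a)) ≤ f i :=
  fun a => Finset.inf'_le (f · a) (Finset.mem_univ i)

theorem apply_le_sup'_univ {ι α β : Type*} [Fintype ι] [Nonempty ι] [SemilatticeSup β]
    (f : ι → α → β) (i : ι) : f i ≤ fun a => Finset.univ.sup' Finset.univ_nonempty (f · a) :=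
  fun a => Finset.le_sup' (f · a) (Finset.mem_univ i)

theorem spatial_pruning_general
    {d : ℕ} {ι κ : Type*} [Fintype ι] [Fintype κ] [Nonempty ι] [Nonempty κ]
    (x : ι → Fin d → ℝ)  -- instances of o^p
    (y : κ → Fin d → ℝ)  -- instances of o'^p
    (p : ι → ℝ) (q : κ → ℝ)
    (hp1 : ∑ i, p i = 1) (hq1 : ∑ j, q j = 1)
    (hdom : dominates
      (fun k => Finset.univ.inf' Finset.univ_nonempty (fun j => y j k))   -- o'^p.min
      (fun k => Finset.univ.sup' Finset.univ_nonempty (fun i => x i k))) -- o^p.max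
    :
    ∑ j, ∑ i, q j * p i * (if dominates (y j) (x i) then (1 : ℝ) else 0) = 1 := by
  have hall : ∀ j i, dominates (y j) (x i) := fun j i =>
    hdom.mono (inf'_univ_le_apply y j) (apply_le_sup'_univ x i)
  simp only [hall, if_true, mul_one]
  rw [← Finset.sum_mul_sum, hq1, hp1, one_mul]

theorem spatial_pruning
    {d : ℕ} {ι κ : Type*} [Fintype ι] [Fintype κ] [Nonempty ι] [Nonempty κ]
    (x : ι → Fin d → ℝ)  -- instances of o^p
    (y : κ → Fin d → ℝ)  -- instances of o'^p
    (p : ι → ℝ) (q : κ → ℝ)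
    (hp0 : ∀ i, 0 ≤ p i) (hq0 : ∀ j, 0 ≤ q j)
    (hp1 : ∑ i, p i = 1) (hq1 : ∑ j, q j = 1)
    (hdom : dominates
      (fun k => Finset.univ.inf' Finset.univ_nonempty (fun j => y j k))   -- o'^p.min
      (fun k => Finset.univ.sup' Finset.univ_nonempty (fun i => x i k))) -- o^p.max
    :
    ∑ j, ∑ i, q j * p i * (if dominates (y j) (x i) then (1 : ℝ) else 0) = 1 :=
  spatial_pruning_general x y p q hp1 hq1 hdom
end

section
/- (Max-Corner Pruning) Let o^p be a probabilistic object with max-corner o^p.max, and o'^p another probabilistic object. If Pr{o'^p ≺ o^p.max} ≥ 1 − α, then the skyline probability of o^p restricted to the single competitor o'^p, namely Σ_{o ∈ o^p} o.p · (1 − Pr{o'^p ≺ o}), is at most α. -/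
/-! Every instance of `o^p` lies below its max-corner, and dominating a point means dominating
everything below it, so each instance is dominated with probability at least `1 - α`; the
skyline probability is a weighted average of the complements. -/

open scoped Classical BigOperators

theorem dominates.mono_right {d : ℕ} {o o' o'' : Fin d → ℝ} (h : dominates o o')
    (h'' : o'' ≤ o') : dominates o o'' :=
  ⟨fun i => (h'' i).trans (h.1 i), h.2.imp fun _ hj => (h'' _).trans_lt hj⟩

/-- `Pr{o'^p ≺ z}` for the probabilistic object with instances `y` and weights `q`. -/
noncomputable def dominationProb {d : ℕ} {κ : Type*} [Fintype κ] (y : κ → Fin d → ℝ)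
    (q : κ → ℝ) (z : Fin d → ℝ) : ℝ :=
  ∑ j, q j * if dominates (y j) z then 1 else 0

theorem dominationProb_antitone {d : ℕ} {κ : Type*} [Fintype κ] (y : κ → Fin d → ℝ)
    {q : κ → ℝ} (hq : ∀ j, 0 ≤ q j) : Antitone (dominationProb y q) := by
  intro z z' hzz'
  refine Finset.sum_le_sum fun j _ => mul_le_mul_of_nonneg_left ?_ (hq j)
  by_cases h : dominates (y j) z'
  · simp [h, h.mono_right hzz']
  · simp only [h, if_false]
    split_ifs <;> norm_num

theorem le_coordMax {d : ℕ} {ι : Type*} [Fintype ι] [Nonempty ι] (x : ι → Fin d → ℝ) (i : ι) :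
    x i ≤ fun k => Finset.univ.sup' Finset.univ_nonempty (fun i => x i k) :=
  fun k => Finset.le_sup' (fun i => x i k) (Finset.mem_univ i)

theorem sum_mul_one_sub_le_of_forall_le {ι : Type*} [Fintype ι] {p f : ι → ℝ} {α : ℝ}
    (hp0 : ∀ i, 0 ≤ p i) (hp1 : ∑ i, p i = 1) (hf : ∀ i, 1 - α ≤ f i) :
    ∑ i, p i * (1 - f i) ≤ α :=
  calc ∑ i, p i * (1 - f i)
      ≤ ∑ i, p i * α :=
        Finset.sum_le_sum fun i _ => mul_le_mul_of_nonneg_left (by linarith [hf i]) (hp0 i)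
    _ = α := by rw [← Finset.sum_mul, hp1, one_mul]

theorem max_corner_pruning_general
    {d : ℕ} {ι κ : Type*} [Fintype ι] [Fintype κ] [Nonempty ι]
    (x : ι → Fin d → ℝ)  -- instances of o^p
    (y : κ → Fin d → ℝ)  -- instances of o'^p
    (p : ι → ℝ) (q : κ → ℝ)
    (hp0 : ∀ i, 0 ≤ p i) (hq0 : ∀ j, 0 ≤ q j)
    (hp1 : ∑ i, p i = 1)
    (α : ℝ)
    (hmax : (∑ j, q j * (if dominates (y j)
        (fun k => Finset.univ.sup' Finset.univ_nonempty (fun i => x i k)) then (1 : ℝ) else 0))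
        ≥ 1 - α) :
    ∑ i, p i * (1 - ∑ j, q j * (if dominates (y j) (x i) then (1 : ℝ) else 0)) ≤ α := by
  have hinstance : ∀ i, 1 - α ≤ dominationProb y q (x i) := fun i =>
    hmax.trans (dominationProb_antitone y hq0 (le_coordMax x i))
  exact sum_mul_one_sub_le_of_forall_le hp0 hp1 hinstance

theorem max_corner_pruning
    {d : ℕ} {ι κ : Type*} [Fintype ι] [Fintype κ] [Nonempty ι]
    (x : ι → Fin d → ℝ)  -- instances of o^p
    (y : κ → Fin d → ℝ)  -- instances of o'^p
    (p : ι → ℝ) (q : κ → ℝ)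
    (hp0 : ∀ i, 0 ≤ p i) (hq0 : ∀ j, 0 ≤ q j)
    (hp1 : ∑ i, p i = 1) (hq1 : ∑ j, q j = 1)
    (α : ℝ) (hα0 : 0 ≤ α) (hα1 : α ≤ 1)
    (hmax : (∑ j, q j * (if dominates (y j)
        (fun k => Finset.univ.sup' Finset.univ_nonempty (fun i => x i k)) then (1 : ℝ) else 0))
        ≥ 1 - α) :
    ∑ i, p i * (1 - ∑ j, q j * (if dominates (y j) (x i) then (1 : ℝ) else 0)) ≤ α :=
  max_corner_pruning_general x y p q hp0 hq0 hp1 α hmax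
end

section
/- (Lower bound via min-corner) The skyline probability of a probabilistic object o^p against competitor set S is bounded below by the skyline probability of its min-corner: Σ_{o ∈ o^p} o.p · Π_{q ∈ S}(1 − Pr{q ≺ o}) ≥ Π_{q ∈ S}(1 − Pr{q ≺ o^p.min}). -/
/-!
Every instance of `o^p` lies coordinatewise above the min-corner, so anything dominating an
instance dominates the min-corner: each competitor beats an instance with probability at most
that of beating the min-corner. Hence every factor `1 - Pr{q ≺ o}` is at least the
corresponding nonnegative min-corner factor, and averaging over the instances keeps the bound.
-/

open scoped Classical BigOperators

open Finset

theorem dominates.of_le {d : ℕ} {o' o m : Fin d → ℝ} (h : dominates o' o)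
    (hm : ∀ i, m i ≤ o i) : dominates o' m :=
  ⟨fun i => (hm i).trans (h.1 i), h.2.imp fun j hj => (hm j).trans_lt hj⟩

/-- `Pr{q ≺ y}` for a probabilistic object `q` with instances `inst` and weights `w`. -/
noncomputable def dominanceProb {d : ℕ} {K : Type*} [Fintype K] (inst : K → Fin d → ℝ)
    (w : K → ℝ) (y : Fin d → ℝ) : ℝ :=
  ∑ s, w s * if dominates (inst s) y then 1 else 0

section dominanceProb

variable {d : ℕ} {K : Type*} [Fintype K] {inst : K → Fin d → ℝ} {w : K → ℝ}

theorem dominanceProb_le_one (hw0 : ∀ s, 0 ≤ w s) (hw1 : ∑ s, w s = 1) (y : Fin d → ℝ) :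
    dominanceProb inst w y ≤ 1 :=
  hw1 ▸ sum_le_sum fun s _ => mul_le_of_le_one_right (hw0 s) (by split_ifs <;> norm_num)

theorem dominanceProb_le_of_le (hw0 : ∀ s, 0 ≤ w s) {y m : Fin d → ℝ}
    (hm : ∀ i, m i ≤ y i) : dominanceProb inst w y ≤ dominanceProb inst w m := by
  refine sum_le_sum fun s _ => mul_le_mul_of_nonneg_left ?_ (hw0 s)
  by_cases h : dominates (inst s) y
  · simp [h, h.of_le hm]
  · simp only [h, if_false]
    split_ifs <;> norm_num

end dominanceProb

theorem le_sum_mul_of_le {ι : Type*} [Fintype ι] {p f : ι → ℝ} {c : ℝ}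
    (hp0 : ∀ a, 0 ≤ p a) (hp1 : ∑ a, p a = 1) (hf : ∀ a, c ≤ f a) :
    c ≤ ∑ a, p a * f a :=
  calc c = ∑ a, p a * c := by rw [← sum_mul, hp1, one_mul]
    _ ≤ ∑ a, p a * f a := sum_le_sum fun a _ => mul_le_mul_of_nonneg_left (hf a) (hp0 a)

theorem skyline_probability_lower_bound_min_corner
    {d : ℕ} {ι γ : Type*} [Fintype ι] [Nonempty ι]
    (x : ι → Fin d → ℝ) (p : ι → ℝ)
    (hp0 : ∀ a, 0 ≤ p a) (hp1 : ∑ a, p a = 1)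
    (K : γ → Type*) [∀ g, Fintype (K g)]
    (inst : ∀ g, K g → Fin d → ℝ) (w : ∀ g, K g → ℝ)
    (hw0 : ∀ g (s : K g), 0 ≤ w g s) (hw1 : ∀ g, ∑ s, w g s = 1)
    (S : Finset γ) :
    ∑ a, p a * ∏ g ∈ S,
        (1 - ∑ s, w g s * (if dominates (inst g s) (x a) then (1 : ℝ) else 0))
      ≥
    ∏ g ∈ S,
        (1 - ∑ s, w g s * (if dominates (inst g s)
            (fun k => Finset.univ.inf' Finset.univ_nonempty (fun a => x a k))
          then (1 : ℝ) else 0)) := by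
  set m : Fin d → ℝ := fun k => univ.inf' univ_nonempty fun a => x a k
  have hm : ∀ a k, m k ≤ x a k := fun a k => inf'_le _ (mem_univ a)
  refine le_sum_mul_of_le hp0 hp1 fun a => prod_le_prod (fun g _ => ?_) fun g _ => ?_
  · exact sub_nonneg.2 (dominanceProb_le_one (hw0 g) (hw1 g) m)
  · exact sub_le_sub_left (dominanceProb_le_of_le (hw0 g) (hm a)) 1
end
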